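/- arXiv:0705.1172 — 2 statements merged into one kernel-verified Lean document; each statement's English description precedes it below -/
import Mathlib

section
/- Every symplectic matrix S ∈ Sp(n, ℝ) can be written as a product S = S₁S₂ of two symplectic matrices S₁ = [[A₁, B₁], [C₁, D₁]] and S₂ = [[A₂, B₂], [C₂, D₂]] with det B₁ ≠ 0 and det B₂ ≠ 0. -/
open Matrix

def J (n : ℕ) : Matrix (Fin n ⊕ Fin n) (Fin n ⊕ Fin n) ℝ :=
  Matrix.fromBlocks 0 1 (-1) 0

open Polynomial

lemma dps_nonneg {n : ℕ} (v : Fin n → ℝ) : 0 ≤ v ⬝ᵥ v :=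
  Finset.sum_nonneg fun _ _ => mul_self_nonneg _

lemma aux_G_det {n : ℕ} (A B C D : Matrix (Fin n) (Fin n) ℝ)
    (h1 : A * Dᵀ - B * Cᵀ = 1) : (A * Aᵀ + B * Bᵀ).det ≠ 0 := by
  intro hdet
  obtain ⟨v, hv, hv0⟩ := Matrix.exists_mulVec_eq_zero_iff.mpr hdet
  have hdot : v ⬝ᵥ ((A * Aᵀ + B * Bᵀ) *ᵥ v) = 0 := by rw [hv0]; simp
  have hexp : v ⬝ᵥ ((A * Aᵀ + B * Bᵀ) *ᵥ v)
      = (Aᵀ *ᵥ v) ⬝ᵥ (Aᵀ *ᵥ v) + (Bᵀ *ᵥ v) ⬝ᵥ (Bᵀ *ᵥ v) := by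
    simp [add_mulVec, dotProduct_add, ← Matrix.mulVec_mulVec, dotProduct_mulVec,
      Matrix.mulVec_transpose]
  rw [hexp] at hdot
  have hA : Aᵀ *ᵥ v = 0 := by
    rw [← dotProduct_self_eq_zero (v := Aᵀ *ᵥ v)]
    nlinarith [dps_nonneg (Aᵀ *ᵥ v), dps_nonneg (Bᵀ *ᵥ v)]
  have hB : Bᵀ *ᵥ v = 0 := by
    rw [← dotProduct_self_eq_zero (v := Bᵀ *ᵥ v)]
    nlinarith [dps_nonneg (Aᵀ *ᵥ v), dps_nonneg (Bᵀ *ᵥ v)]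
  have h1t : D * Aᵀ - C * Bᵀ = 1 := by
    have := congrArg Matrix.transpose h1
    simpa [Matrix.transpose_sub, Matrix.transpose_mul] using this
  have : v = 0 := by
    calc v = (D * Aᵀ - C * Bᵀ) *ᵥ v := by rw [h1t, Matrix.one_mulVec]
    _ = D *ᵥ (Aᵀ *ᵥ v) - C *ᵥ (Bᵀ *ᵥ v) := by
        rw [sub_mulVec, Matrix.mulVec_mulVec, Matrix.mulVec_mulVec]
    _ = 0 := by rw [hA, hB]; simp
  exact hv this

lemma aux_exists_u {n : ℕ} (A B C D : Matrix (Fin n) (Fin n) ℝ)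
    (hsym : A * Bᵀ = B * Aᵀ) (h1 : A * Dᵀ - B * Cᵀ = 1) :
    ∃ u : ℝ, (A + u • B).det ≠ 0 := by
  have hG : (A * Aᵀ + B * Bᵀ).det ≠ 0 := aux_G_det A B C D h1
  set φ : ℝ →+* ℂ := algebraMap ℝ ℂ with hφ
  set Mc : Matrix (Fin n) (Fin n) ℂ := A.map φ + Complex.I • B.map φ with hMc
  have hMcH : Mcᴴ = Aᵀ.map φ - Complex.I • Bᵀ.map φ := by
    ext i j
    simp [hMc, Matrix.conjTranspose_apply, Matrix.map_apply, hφ, Complex.conj_ofReal]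
    ring
  have hprod : Mc * Mcᴴ = (A * Aᵀ + B * Bᵀ).map φ := by
    rw [hMcH, hMc]
    have hAB : (A.map ⇑φ) * (Bᵀ.map ⇑φ) = (B.map ⇑φ) * (Aᵀ.map ⇑φ) := by
      rw [← Matrix.map_mul, ← Matrix.map_mul, hsym]
    rw [add_mul, mul_sub, mul_sub, Matrix.mul_smul, Matrix.mul_smul, Matrix.smul_mul,
      Matrix.smul_mul, hAB, smul_smul, Complex.I_mul_I, neg_one_smul,
      Matrix.map_add, Matrix.map_mul, Matrix.map_mul]
    · module
    · exact fun a b => map_add φ a b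
  have hdetMc : Mc.det ≠ 0 := by
    intro h0
    have hm : Mc.det * Mcᴴ.det = ((A * Aᵀ + B * Bᵀ).map φ).det := by
      rw [← Matrix.det_mul, hprod]
    rw [h0, zero_mul] at hm
    have h2 : φ ((A * Aᵀ + B * Bᵀ).det) = 0 := by
      rw [RingHom.map_det]; exact hm.symm
    exact hG (by simpa [hφ, Complex.ofReal_eq_zero] using h2)
  set q : Polynomial ℝ :=
    (A.map Polynomial.C + (Polynomial.X : ℝ[X]) • B.map Polynomial.C).det with hq
  have hq_eval : ∀ u : ℝ, q.eval u = (A + u • B).det := by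
    intro u
    show (Polynomial.evalRingHom u) q = _
    rw [hq, RingHom.map_det]
    congr 1
    ext i j
    simp [Matrix.map_apply, RingHom.mapMatrix_apply, Matrix.smul_apply, smul_eq_mul]
    ring
  have hq_ne : q ≠ 0 := by
    intro h0
    apply hdetMc
    have := RingHom.map_det (Polynomial.aeval (Complex.I)).toRingHom
      (A.map Polynomial.C + (Polynomial.X : ℝ[X]) • B.map Polynomial.C)
    rw [← hq, h0, map_zero] at this
    rw [hMc]
    convert this.symm using 2
    ext i j
    simp [Matrix.map_apply, RingHom.mapMatrix_apply, Matrix.smul_apply, smul_eq_mul, hφ]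
    ring
  by_contra hcon
  push_neg at hcon
  apply hq_ne
  apply Polynomial.funext
  intro u
  rw [hq_eval u, eval_zero]
  exact hcon u

lemma rot_symp {n : ℕ} (c s : ℝ) (hcs : c^2 + s^2 = 1) :
    (Matrix.fromBlocks (c • 1) (s • 1) (-(s • (1 : Matrix (Fin n) (Fin n) ℝ))) (c • 1))ᵀ * J n *
      Matrix.fromBlocks (c • 1) (s • 1) (-(s • 1)) (c • 1) = J n := by
  rw [Matrix.fromBlocks_transpose]
  simp only [_root_.J, Matrix.fromBlocks_multiply, Matrix.smul_mul, Matrix.mul_smul,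
    Matrix.one_mul, Matrix.mul_one, Matrix.mul_zero, Matrix.zero_mul, Matrix.mul_neg,
    Matrix.neg_mul, Matrix.transpose_smul, Matrix.transpose_one, Matrix.transpose_neg,
    smul_smul, smul_neg, neg_neg, add_zero, zero_add, smul_zero]
  rw [Matrix.fromBlocks_inj]
  refine ⟨by module, ?_, ?_, by module⟩
  · rw [← add_smul, show s*s + c*c = 1 by nlinarith, one_smul]
  · rw [← neg_add, ← add_smul, show c*c + s*s = 1 by nlinarith, one_smul]

lemma rot_mul_rot {n : ℕ} (c s : ℝ) (hcs : c^2 + s^2 = 1) :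
    Matrix.fromBlocks (c • 1) (s • 1) (-(s • (1 : Matrix (Fin n) (Fin n) ℝ))) (c • 1) *
      Matrix.fromBlocks (c • 1) ((-s) • 1) (-((-s) • 1)) (c • 1)
      = (1 : Matrix (Fin n ⊕ Fin n) (Fin n ⊕ Fin n) ℝ) := by
  simp only [Matrix.fromBlocks_multiply, Matrix.smul_mul, Matrix.mul_smul,
    Matrix.one_mul, Matrix.mul_one, Matrix.mul_neg, Matrix.neg_mul,
    smul_smul, smul_neg, neg_neg, neg_smul]
  rw [← Matrix.fromBlocks_one, Matrix.fromBlocks_inj]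
  refine ⟨?_, by module, by module, ?_⟩
  · rw [← add_smul, show c*c + s*s = 1 by nlinarith, one_smul]
  · rw [← add_smul, show s*s + c*c = 1 by nlinarith, one_smul]

theorem stmt_3 {n : ℕ} (S : Matrix (Fin n ⊕ Fin n) (Fin n ⊕ Fin n) ℝ)
    (hS : Sᵀ * J n * S = J n) :
    ∃ A₁ B₁ C₁ D₁ A₂ B₂ C₂ D₂ : Matrix (Fin n) (Fin n) ℝ,
      (Matrix.fromBlocks A₁ B₁ C₁ D₁)ᵀ * J n * Matrix.fromBlocks A₁ B₁ C₁ D₁ = J n ∧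
      (Matrix.fromBlocks A₂ B₂ C₂ D₂)ᵀ * J n * Matrix.fromBlocks A₂ B₂ C₂ D₂ = J n ∧
      B₁.det ≠ 0 ∧ B₂.det ≠ 0 ∧
      S = Matrix.fromBlocks A₁ B₁ C₁ D₁ * Matrix.fromBlocks A₂ B₂ C₂ D₂ := by
  -- Step 1: S * J * Sᵀ = J
  have hJJ : J n * J n = -1 := by
    rw [show (-1 : Matrix (Fin n ⊕ Fin n) (Fin n ⊕ Fin n) ℝ)
        = Matrix.fromBlocks (-1) 0 0 (-1) by
      rw [← Matrix.fromBlocks_one, Matrix.fromBlocks_neg]; simp]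
    simp [_root_.J, Matrix.fromBlocks_multiply]
  have hleft : (-(J n) * Sᵀ * J n) * S = 1 := by
    calc (-(J n) * Sᵀ * J n) * S = -(J n) * (Sᵀ * J n * S) := by noncomm_ring
    _ = -(J n) * J n := by rw [hS]
    _ = 1 := by rw [Matrix.neg_mul, hJJ]; simp
  have hright : S * (-(J n) * Sᵀ * J n) = 1 := mul_eq_one_comm.mp hleft
  have h3 : S * J n * Sᵀ * (J n * J n) = -(S * (-(J n) * Sᵀ * J n)) * J n := by noncomm_ring
  rw [hright, hJJ] at h3
  have h2 : S * J n * Sᵀ = J n := by simpa using h3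
  -- Step 2: block relations
  set A := S.toBlocks₁₁ with hA
  set B := S.toBlocks₁₂ with hB
  set C := S.toBlocks₂₁ with hC
  set D := S.toBlocks₂₂ with hD
  have hSb : S = Matrix.fromBlocks A B C D := (Matrix.fromBlocks_toBlocks S).symm
  have h4 := h2
  rw [hSb, _root_.J, Matrix.fromBlocks_transpose] at h4
  simp only [Matrix.fromBlocks_multiply, Matrix.mul_zero, Matrix.zero_mul, Matrix.mul_one,
    Matrix.mul_neg, Matrix.neg_mul, add_zero, zero_add] at h4
  rw [Matrix.fromBlocks_inj] at h4
  obtain ⟨e11, e12, -, -⟩ := h4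
  have hsym : A * Bᵀ = B * Aᵀ := (neg_add_eq_zero.mp e11).symm
  have h1 : A * Dᵀ - B * Cᵀ = 1 := by rw [← e12]; abel
  -- Step 3: find u
  obtain ⟨u, hu⟩ := aux_exists_u A B C D hsym h1
  -- Step 4: c, s
  set r : ℝ := Real.sqrt (1 + u^2) with hrdef
  have hr : 0 < r := Real.sqrt_pos.mpr (by positivity)
  have hr2 : r^2 = 1 + u^2 := Real.sq_sqrt (by positivity)
  set c : ℝ := u / r with hc
  set s : ℝ := 1 / r with hs
  have hs0 : s ≠ 0 := by simp [hs, hr.ne']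
  have hcs : c^2 + s^2 = 1 := by
    rw [hc, hs]
    field_simp
    linarith [hr2]
  have hcus : c = u * s := by rw [hc, hs]; ring
  -- Step 5: witnesses
  refine ⟨c • A - s • B, s • A + c • B, c • C - s • D, s • C + c • D,
    c • (1 : Matrix (Fin n) (Fin n) ℝ), (-s) • 1, -((-s) • 1), c • 1, ?_, ?_, ?_, ?_, ?_⟩
  · -- S₁ symplectic
    have hM1 : Matrix.fromBlocks (c • A - s • B) (s • A + c • B) (c • C - s • D) (s • C + c • D)
        = S * Matrix.fromBlocks (c • 1) (s • 1) (-(s • 1)) (c • 1) := by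
      rw [hSb, Matrix.fromBlocks_multiply, Matrix.fromBlocks_inj]
      refine ⟨?_, ?_, ?_, ?_⟩ <;>
        simp [Matrix.mul_smul, Matrix.mul_neg, sub_eq_add_neg]
    rw [hM1, Matrix.transpose_mul]
    calc (Matrix.fromBlocks (c • 1) (s • 1) (-(s • 1)) (c • 1))ᵀ * Sᵀ * J n *
          (S * Matrix.fromBlocks (c • 1) (s • 1) (-(s • 1)) (c • 1))
        = (Matrix.fromBlocks (c • 1) (s • 1) (-(s • 1)) (c • 1))ᵀ * (Sᵀ * J n * S) *
          Matrix.fromBlocks (c • 1) (s • 1) (-(s • 1)) (c • 1) := by noncomm_ring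
      _ = J n := by rw [hS]; exact rot_symp c s hcs
  · -- S₂ symplectic
    exact rot_symp c (-s) (by nlinarith)
  · -- det B₁ ≠ 0
    have : s • A + c • B = s • (A + u • B) := by
      rw [smul_add, smul_smul, hcus, mul_comm]
    rw [this, Matrix.det_smul]
    exact mul_ne_zero (pow_ne_zero _ hs0) hu
  · -- det B₂ ≠ 0
    rw [Matrix.det_smul, Matrix.det_one, mul_one]
    exact pow_ne_zero _ (neg_ne_zero.mpr hs0)
  · -- product
    have hM1 : Matrix.fromBlocks (c • A - s • B) (s • A + c • B) (c • C - s • D) (s • C + c • D)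
        = S * Matrix.fromBlocks (c • 1) (s • 1) (-(s • 1)) (c • 1) := by
      rw [hSb, Matrix.fromBlocks_multiply, Matrix.fromBlocks_inj]
      refine ⟨?_, ?_, ?_, ?_⟩ <;>
        simp [Matrix.mul_smul, Matrix.mul_neg, sub_eq_add_neg]
    rw [hM1, Matrix.mul_assoc, rot_mul_rot c s hcs, Matrix.mul_one]
end

section
/- For a free symplectic matrix S = [[A, B], [C, D]] (det B ≠ 0), the relation (x, p) = S(x', p') holds if and only if p = ∂_x W(x, x') and p' = -∂_{x'} W(x, x'), where W(x, x') = ½DB⁻¹x·x - B⁻¹x·x' + ½B⁻¹Ax'·x'. -/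
open Matrix

/- The symplectic relations `BᵀD = DᵀB` and `BᵀC - DᵀA = -1` force `C = DB⁻¹A - B⁻ᵀ`. Solving
`x = Ax' + Bp'` for `p'` and substituting it together with this expression for `C` into
`p = Cx' + Dp'` gives `p = DB⁻¹x - B⁻ᵀx'`. -/

theorem fromBlocks_transpose_mul_J_mul_fromBlocks {n : ℕ} (A B C D : Matrix (Fin n) (Fin n) ℝ) :
    (fromBlocks A B C D)ᵀ * J n * fromBlocks A B C D =
      fromBlocks (Aᵀ * C - Cᵀ * A) (Aᵀ * D - Cᵀ * B) (Bᵀ * C - Dᵀ * A) (Bᵀ * D - Dᵀ * B) := by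
  simp only [_root_.J, fromBlocks_transpose, fromBlocks_multiply, Matrix.mul_zero,
    Matrix.mul_one, Matrix.mul_neg, Matrix.neg_mul, add_zero, zero_add, neg_add_eq_sub]

namespace Matrix

variable {m R : Type*} [Fintype m] [DecidableEq m] [CommRing R]

theorem eq_mul_inv_mul_sub_transpose_inv {A B C D : Matrix m m R} (hB : IsUnit B.det)
    (hBD : Bᵀ * D = Dᵀ * B) (hBC : Bᵀ * C - Dᵀ * A = -1) :
    C = D * B⁻¹ * A - B⁻¹ᵀ := by
  have := Bᵀ.invertibleOfIsUnitDet (by rwa [det_transpose])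
  rw [← mul_right_inj_of_invertible Bᵀ]
  calc Bᵀ * C = Dᵀ * A - 1 := by rw [sub_eq_add_neg, ← hBC, add_sub_cancel]
    _ = Bᵀ * D * B⁻¹ * A - (B⁻¹ * B)ᵀ := by
      rw [hBD, Matrix.mul_assoc Dᵀ, mul_nonsing_inv B hB, nonsing_inv_mul B hB, transpose_one,
        Matrix.mul_one]
    _ = Bᵀ * (D * B⁻¹ * A - B⁻¹ᵀ) := by
      simp only [transpose_mul, Matrix.mul_sub, Matrix.mul_assoc]

theorem eq_mulVec_add_mulVec_iff {A B : Matrix m m R} (hB : IsUnit B.det) (x x' p' : m → R) :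
    x = A *ᵥ x' + B *ᵥ p' ↔ p' = B⁻¹ *ᵥ x - (B⁻¹ * A) *ᵥ x' := by
  constructor
  · rintro rfl
    rw [mulVec_add, mulVec_mulVec, mulVec_mulVec, nonsing_inv_mul B hB, one_mulVec,
      add_sub_cancel_left]
  · rintro rfl
    rw [mulVec_sub, mulVec_mulVec, mulVec_mulVec, mul_nonsing_inv B hB, ← Matrix.mul_assoc,
      mul_nonsing_inv B hB, one_mulVec, Matrix.one_mul, add_sub_cancel]

end Matrix

theorem stmt_6 {n : ℕ} (A B C D : Matrix (Fin n) (Fin n) ℝ)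
    (hS : (Matrix.fromBlocks A B C D)ᵀ * J n * Matrix.fromBlocks A B C D = J n)
    (hB : B.det ≠ 0) (x p x' p' : Fin n → ℝ) :
    (x = A.mulVec x' + B.mulVec p' ∧ p = C.mulVec x' + D.mulVec p') ↔
      (p = (D * B⁻¹).mulVec x - (B⁻¹)ᵀ.mulVec x' ∧
       p' = B⁻¹.mulVec x - (B⁻¹ * A).mulVec x') := by
  have hBu : IsUnit B.det := hB.isUnit
  rw [fromBlocks_transpose_mul_J_mul_fromBlocks, _root_.J, fromBlocks_inj] at hS
  obtain ⟨-, -, hBC, hBD⟩ := hS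
  have hC := eq_mul_inv_mul_sub_transpose_inv hBu (sub_eq_zero.mp hBD) hBC
  rw [eq_mulVec_add_mulVec_iff hBu, and_comm]
  refine and_congr_left fun hp' => ?_
  rw [hp', hC]
  congr! 1
  rw [sub_mulVec, mulVec_sub, mulVec_mulVec, mulVec_mulVec, ← Matrix.mul_assoc]
  abel
end
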